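/- For n ≥ 1 and u > 0, the value Q₀(1+u) of the hypergeometric function Q_s(t) = (Γ(s+n)Γ(s+1)/Γ(2s+n+1)) t^{-(s+n)} F(s+n, s+1, 2s+n+1; 1/t) at s = 0, t = 1+u equals log(1+u) − log(u) − Σ_{i=1}^{n−1} 1/(i(1+u)^i). In particular Q₀(1+u) = P₀(u) where P₀(u) = ∫₁^∞ du'/(u'(1+u u')ⁿ). -/

import Mathlib

/-!
At `s = 0` the Gamma prefactor is `1/n`, and `(n)_k / (n+1)_k = n/(n+k)`, so with `z = 1/(1+u)`
the hypergeometric side collapses to `∑_{k ≥ n} z^k / k`: the tail of the series of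
`-log (1 - z) = log (1+u) - log u`. The integral is evaluated by the fundamental theorem of calculus
with the antiderivative `log x - log (1+ux) + ∑_{i=1}^{n-1} 1 / (i (1+ux)^i)`, which tends to
`-log u` at infinity.
-/

/-- The Gauss hypergeometric series `F(a,b,c;z) = ∑_{k≥0} (a)_k (b)_k / ((c)_k k!) z^k`. -/
noncomputable def gaussHyper (a b c z : ℂ) : ℂ :=
  ∑' k : ℕ,
    ((ascPochhammer ℂ k).eval a * (ascPochhammer ℂ k).eval b /
      ((ascPochhammer ℂ k).eval c * (k.factorial : ℂ))) * z ^ k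

/-- `Q_s(t) = (Γ(s+n)Γ(s+1)/Γ(2s+n+1)) · t^{-(s+n)} · F(s+n, s+1, 2s+n+1; 1/t)`. -/
noncomputable def Qfun (n : ℕ) (s : ℂ) (t : ℝ) : ℂ :=
  (Complex.Gamma (s + n) * Complex.Gamma (s + 1) / Complex.Gamma (2 * s + n + 1)) *
    (t : ℂ) ^ (-(s + n)) * gaussHyper (s + n) (s + 1) (2 * s + n + 1) (1 / (t : ℂ))

open Finset Filter Topology Set

theorem ascPochhammer_eval_mul_add_natCast {S : Type*} [CommSemiring S] (a : S) (k : ℕ) :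
    (ascPochhammer S k).eval a * (a + k) = a * (ascPochhammer S k).eval (a + 1) := by
  rw [← ascPochhammer_succ_eval, ascPochhammer_succ_left]
  simp

theorem gaussHyper_self_one_self_add_one (a z : ℂ) (ha : ∀ k : ℕ, a + k ≠ 0) :
    gaussHyper a 1 (a + 1) z = ∑' k : ℕ, a / (a + k) * z ^ k := by
  refine tsum_congr fun k => ?_
  have hpoch : (ascPochhammer ℂ k).eval (a + 1) ≠ 0 := by
    rw [ne_eq, ascPochhammer_eval_eq_zero_iff]
    rintro ⟨j, -, hj⟩
    exact ha (j + 1) (by push_cast; linear_combination hj)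
  rw [ascPochhammer_eval_one, mul_div_mul_right _ _ (mod_cast k.factorial_ne_zero),
    div_eq_div_iff hpoch (ha k) |>.mpr (ascPochhammer_eval_mul_add_natCast a k)]

theorem Qfun_zero_eq_tsum (n : ℕ) (hn : n ≠ 0) (t : ℝ) :
    Qfun n 0 t = ∑' k : ℕ, (t : ℂ)⁻¹ ^ (k + n) / (k + n) := by
  have hn' : (n : ℂ) ≠ 0 := Nat.cast_ne_zero.2 hn
  have hGamma : Complex.Gamma n ≠ 0 :=
    Complex.Gamma_ne_zero_of_re_pos (by simpa using Nat.pos_of_ne_zero hn)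
  simp only [Qfun, zero_add, mul_zero, Complex.Gamma_one, mul_one]
  rw [gaussHyper_self_one_self_add_one _ _ fun k => by exact_mod_cast (by omega : n + k ≠ 0),
    Complex.Gamma_add_one _ hn', Complex.cpow_neg, Complex.cpow_natCast, ← tsum_mul_left]
  refine tsum_congr fun k => ?_
  simp only [one_div, inv_pow, pow_add]
  field_simp
  ring

theorem Real.hasSum_tail_pow_div_log_of_abs_lt_one {z : ℝ} (hz : |z| < 1) (m : ℕ) :
    HasSum (fun k : ℕ => z ^ (k + m + 1) / (k + m + 1))
      (-Real.log (1 - z) - ∑ i ∈ range m, z ^ (i + 1) / (i + 1)) := by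
  simpa only [Nat.cast_add] using
    (hasSum_nat_add_iff' m).2 (Real.hasSum_pow_div_log_of_abs_lt_one hz)

noncomputable def P₀Primitive (u : ℝ) (m : ℕ) (x : ℝ) : ℝ :=
  Real.log x - Real.log (1 + u * x) + ∑ i ∈ range m, ((i + 1) * (1 + u * x) ^ (i + 1))⁻¹

theorem hasDerivAt_P₀Primitive {u x : ℝ} (hx : x ≠ 0) (hy : 1 + u * x ≠ 0) (m : ℕ) :
    HasDerivAt (P₀Primitive u m) (1 / (x * (1 + u * x) ^ (m + 1))) x := by
  have hlin : HasDerivAt (fun x => 1 + u * x) u x := by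
    simpa using ((hasDerivAt_id x).const_mul u).const_add 1
  -- `field_simp` normalises `1 + u * x` to `1 + x * u` and needs it nonzero in that form
  have hy' : 1 + x * u ≠ 0 := by rwa [mul_comm]
  induction m with
  | zero =>
    have hP : P₀Primitive u 0 = fun y => Real.log y - Real.log (1 + u * y) := by
      funext y
      simp [P₀Primitive]
    rw [hP]
    refine ((Real.hasDerivAt_log hx).sub (hlin.log hy)).congr_deriv ?_
    field_simp
    ring
  | succ m ih =>
    have hP : P₀Primitive u (m + 1)
        = fun y => P₀Primitive u m y + ((m + 1) * (1 + u * y) ^ (m + 1))⁻¹ := by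
      funext y
      simp [P₀Primitive, sum_range_succ, add_assoc]
    have hterm := ((hlin.fun_pow (m + 1)).const_mul ((m : ℝ) + 1)).inv
      (mul_ne_zero (by positivity) (pow_ne_zero _ hy))
    rw [hP]
    refine (ih.add hterm).congr_deriv ?_
    push_cast
    field_simp
    ring

theorem tendsto_P₀Primitive_atTop {u : ℝ} (hu : 0 < u) (m : ℕ) :
    Tendsto (P₀Primitive u m) atTop (𝓝 (-Real.log u)) := by
  have hy : Tendsto (fun x : ℝ => 1 + u * x) atTop atTop :=
    tendsto_atTop_add_const_left _ _ (tendsto_id.const_mul_atTop hu)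
  have hlog : Tendsto (fun x : ℝ => -Real.log (x⁻¹ + u)) atTop (𝓝 (-Real.log u)) := by
    have := (tendsto_inv_atTop_zero.add_const u).log (by simpa using hu.ne')
    simpa using this.neg
  have hsum : Tendsto (fun x : ℝ => ∑ i ∈ range m, ((i + 1) * (1 + u * x) ^ (i + 1))⁻¹)
      atTop (𝓝 0) := by
    simpa using tendsto_finsetSum (range m) fun i _ =>
      ((tendsto_pow_atTop i.succ_ne_zero).comp hy).const_mul_atTop (by positivity : (0:ℝ) < i + 1)
        |>.inv_tendsto_atTop
  rw [← add_zero (-Real.log u)]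
  refine (hlog.add hsum).congr' ?_
  filter_upwards [eventually_gt_atTop 0] with x hx
  have hy : 0 < 1 + u * x := by positivity
  rw [P₀Primitive, ← Real.log_div hx.ne' hy.ne', ← Real.log_inv]
  congr 2
  field_simp

theorem integral_Ioi_one_div_mul_one_add_mul_pow {u : ℝ} (hu : 0 < u) (m : ℕ) :
    ∫ x in Ioi (1 : ℝ), 1 / (x * (1 + u * x) ^ (m + 1))
      = Real.log (1 + u) - Real.log u - ∑ i ∈ range m, ((i + 1) * (1 + u) ^ (i + 1))⁻¹ := by
  rw [MeasureTheory.integral_Ioi_of_hasDerivAt_of_nonneg'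
      (fun x hx => have : 0 < x := zero_lt_one.trans_le hx
        hasDerivAt_P₀Primitive this.ne' (by positivity) m)
      (fun x hx => have : 0 < x := zero_lt_one.trans hx
        by positivity)
      (tendsto_P₀Primitive_atTop hu m)]
  simp only [P₀Primitive, Real.log_one, mul_one, zero_sub]
  ring

/-- For `n ≥ 1` and `u > 0`,
`Q₀(1+u) = log(1+u) − log u − ∑_{i=1}^{n−1} 1/(i(1+u)^i)`, and in particular
`Q₀(1+u) = P₀(u)` where `P₀(u) = ∫₁^∞ du'/(u'(1+u u')ⁿ)`. -/
theorem stmt5 (n : ℕ) (hn : 1 ≤ n) (u : ℝ) (hu : 0 < u) :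
    Qfun n 0 (1 + u)
        = ((Real.log (1 + u) - Real.log u
            - ∑ i ∈ Finset.Icc 1 (n - 1), 1 / ((i : ℝ) * (1 + u) ^ i) : ℝ) : ℂ)
      ∧ Qfun n 0 (1 + u)
        = ((∫ x in Set.Ioi (1 : ℝ), 1 / (x * (1 + u * x) ^ n) : ℝ) : ℂ) := by
  obtain ⟨m, rfl⟩ : ∃ m, n = m + 1 := ⟨n - 1, by omega⟩
  have hz : |(1 + u)⁻¹| < 1 := by
    rw [abs_inv, abs_of_pos (by positivity)]
    exact inv_lt_one_of_one_lt₀ (by linarith)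
  have hlog : -Real.log (1 - (1 + u)⁻¹) = Real.log (1 + u) - Real.log u := by
    have h : 1 - (1 + u)⁻¹ = u / (1 + u) := by
      field_simp
      ring
    rw [h, Real.log_div hu.ne' (by positivity), neg_sub]
  set T := Real.log (1 + u) - Real.log u - ∑ i ∈ range m, ((i + 1) * (1 + u) ^ (i + 1))⁻¹
  have hsum : HasSum (fun k : ℕ => (1 + u)⁻¹ ^ (k + m + 1) / (k + m + 1)) T := by
    simpa [T, hlog, div_eq_mul_inv, mul_comm] using Real.hasSum_tail_pow_div_log_of_abs_lt_one hz m
  have hQ : Qfun (m + 1) 0 (1 + u) = T := by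
    rw [Qfun_zero_eq_tsum _ m.add_one_ne_zero, ← hsum.tsum_eq, Complex.ofReal_tsum]
    push_cast
    simp only [add_assoc]
  have hIcc : ∑ i ∈ Icc 1 (m + 1 - 1), 1 / ((i : ℝ) * (1 + u) ^ i)
      = ∑ i ∈ range m, ((i + 1) * (1 + u) ^ (i + 1))⁻¹ := by
    rw [Nat.add_sub_cancel, ← Finset.Ico_add_one_right_eq_Icc, sum_Ico_eq_sum_range,
      Nat.add_sub_cancel]
    refine sum_congr rfl fun i _ => ?_
    push_cast
    rw [one_div, add_comm 1 (i : ℝ), add_comm 1 i]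
  exact ⟨by rw [hQ, hIcc], by rw [hQ, integral_Ioi_one_div_mul_one_add_mul_pow hu m]⟩
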